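/- arXiv:2207.11578 — 5 statements merged into one kernel-verified Lean document; each statement's English description precedes it below -/
import Mathlib

section
/- Let S be a maximal independent set of a finite simple graph G = (V,E) and let e* > 0. Then the profile x with x_k = e* for k ∈ S and x_k = 0 for k ∉ S satisfies: x_k + Σ_{j∈N_k} x_j ≥ e* for all k ∈ V, and x_k > 0 implies x_k + Σ_{j∈N_k} x_j = e* (i.e., it is a Nash equilibrium of the public goods game with unilateral effort e*). -/
open Finset

namespace SimpleGraph

variable {V : Type*} {G : SimpleGraph V} {S : Set V}

theorem exists_adj_mem_of_maximal_independent
    (hInd : ∀ i ∈ S, ∀ j ∈ S, ¬ G.Adj i j)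
    (hMax : ∀ T : Set V, S ⊆ T → (∀ i ∈ T, ∀ j ∈ T, ¬ G.Adj i j) → T = S)
    {k : V} (hk : k ∉ S) : ∃ j ∈ S, G.Adj k j := by
  by_contra! hno
  have hIndInsert : ∀ i ∈ insert k S, ∀ j ∈ insert k S, ¬ G.Adj i j := by
    rintro i (rfl | hi) j (rfl | hj)
    · exact G.loopless.irrefl _
    · exact hno j hj
    · exact fun h => hno i hi h.symm
    · exact hInd i hi j hj
  exact hk (hMax _ (Set.subset_insert k S) hIndInsert ▸ Set.mem_insert k S)

variable [Fintype V] [DecidableRel G.Adj] [DecidablePred (· ∈ S)] {c : ℝ} {k : V}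

theorem sum_neighborFinset_ite_mem_eq_zero (h : ∀ j ∈ S, ¬ G.Adj k j) :
    ∑ j ∈ G.neighborFinset k, (if j ∈ S then c else 0) = 0 :=
  sum_eq_zero fun j hj => if_neg fun hjS => h j hjS ((mem_neighborFinset G k j).1 hj)

theorem le_sum_neighborFinset_ite_mem (hc : 0 ≤ c) {j : V} (hjS : j ∈ S) (hadj : G.Adj k j) :
    c ≤ ∑ j ∈ G.neighborFinset k, (if j ∈ S then c else 0) := by
  have hle := single_le_sum (f := fun j => if j ∈ S then c else 0)
    (fun i _ => by split_ifs <;> simp [hc]) ((mem_neighborFinset G k j).2 hadj)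
  simpa only [hjS, if_true] using hle

end SimpleGraph

/-- The specialized profile supported on a maximal independent set `S`
(`x_k = e*` on `S`, `0` off `S`) satisfies the Nash equilibrium conditions of the
public goods game with unilateral effort `e* > 0`. -/
theorem stmt1 {V : Type*} [Fintype V] (G : SimpleGraph V) [DecidableRel G.Adj]
    (S : Set V) [DecidablePred (· ∈ S)]
    (hInd : ∀ i ∈ S, ∀ j ∈ S, ¬ G.Adj i j)
    (hMax : ∀ T : Set V, S ⊆ T → (∀ i ∈ T, ∀ j ∈ T, ¬ G.Adj i j) → T = S)
    (estar : ℝ) (he : 0 < estar)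
    (x : V → ℝ) (hx : x = fun k => if k ∈ S then estar else 0) :
    ∀ k : V, estar ≤ x k + ∑ j ∈ G.neighborFinset k, x j ∧
      (0 < x k → x k + ∑ j ∈ G.neighborFinset k, x j = estar) := by
  subst hx
  intro k
  by_cases hk : k ∈ S
  · have hsum := SimpleGraph.sum_neighborFinset_ite_mem_eq_zero (c := estar) (hInd k hk)
    simp only [hk, if_true, hsum, add_zero, le_refl, implies_true, and_self]
  · obtain ⟨j, hjS, hadj⟩ := SimpleGraph.exists_adj_mem_of_maximal_independent hInd hMax hk
    have hle := SimpleGraph.le_sum_neighborFinset_ite_mem he.le hjS hadj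
    simp only [hk, if_false, zero_add, lt_irrefl, false_implies, and_true]
    exact hle
end

section
/- In the public goods game on graph G with unilateral effort e*, the maximum of the aggregate effort Σ_{k∈V} x_k over all Nash equilibria equals α(G)·e*, where α(G) is the independence number of G, and this maximum is attained by the specialized equilibrium supported on a maximum independent set. -/
/-!
A maximum independent set `S` is maximal, so every vertex outside `S` sees a vertex of `S`;
hence the specialized profile `e*·1_S` is an equilibrium, with aggregate effort `α(G)·e*`.

Conversely, let `x` be an equilibrium and choose an independent set `I` inside the support of `x`
that is maximal there. Every vertex of the support lies in the closed neighbourhood of some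
`i ∈ I`, and the closed neighbourhood of an active vertex carries total effort exactly `e*`.
Since `x ≥ 0`, a union bound gives `∑ₖ xₖ ≤ |I|·e* ≤ α(G)·e*`.
-/

open Finset

/-- Nash equilibrium (LCP form) of the public goods game with unilateral effort `estar`. -/
def isNE {V : Type*} [Fintype V] (G : SimpleGraph V) [DecidableRel G.Adj]
    (estar : ℝ) (x : V → ℝ) : Prop :=
  (∀ k, 0 ≤ x k) ∧
  (∀ k, estar ≤ x k + ∑ j ∈ G.neighborFinset k, x j) ∧
  (∀ k, 0 < x k → x k + ∑ j ∈ G.neighborFinset k, x j = estar)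

/-- Independence number of a finite graph. -/
noncomputable def indepNum {V : Type*} [Fintype V] [DecidableEq V]
    (G : SimpleGraph V) [DecidableRel G.Adj] : ℕ :=
  Finset.sup (Finset.univ.powerset.filter
    fun s : Finset V => ∀ i ∈ s, ∀ j ∈ s, ¬ G.Adj i j) Finset.card

lemma Finset.sum_sup_le_sum_sum {ι α M : Type*} [DecidableEq α] [AddCommMonoid M]
    [PartialOrder M] [IsOrderedAddMonoid M] {f : α → M} (hf : ∀ a, 0 ≤ f a)
    (s : Finset ι) (t : ι → Finset α) :
    ∑ a ∈ s.sup t, f a ≤ ∑ i ∈ s, ∑ a ∈ t i, f a :=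
  s.apply_sup_le_sum (f := fun u => ∑ a ∈ u, f a) sum_empty fun {u v} =>
    calc ∑ a ∈ u ∪ v, f a ≤ ∑ a ∈ u ∪ v, f a + ∑ a ∈ u ∩ v, f a :=
          le_add_of_nonneg_right (sum_nonneg fun a _ => hf a)
      _ = ∑ a ∈ u, f a + ∑ a ∈ v, f a := sum_union_inter

section IndependentSets

variable {V : Type*} [DecidableEq V] {G : SimpleGraph V}

lemma indep_insert {I : Finset V} {k : V} (hI : ∀ i ∈ I, ∀ j ∈ I, ¬ G.Adj i j)
    (hk : ∀ i ∈ I, ¬ G.Adj i k) : ∀ i ∈ insert k I, ∀ j ∈ insert k I, ¬ G.Adj i j := by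
  simp only [mem_insert]
  rintro i (rfl | hi) j (rfl | hj)
  · exact G.loopless.irrefl _
  · exact fun h => hk j hj h.symm
  · exact hk i hi
  · exact hI i hi j hj

variable [Fintype V] [DecidableRel G.Adj]

lemma card_le_indepNum {S : Finset V} (hS : ∀ i ∈ S, ∀ j ∈ S, ¬ G.Adj i j) :
    #S ≤ indepNum G :=
  le_sup (f := card) (mem_filter.2 ⟨mem_powerset.2 (subset_univ S), hS⟩)

variable (G) in
lemma exists_card_eq_indepNum :
    ∃ S : Finset V, (∀ i ∈ S, ∀ j ∈ S, ¬ G.Adj i j) ∧ #S = indepNum G := by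
  obtain ⟨S, hS, hcard⟩ := exists_mem_eq_sup
    (univ.powerset.filter fun s : Finset V => ∀ i ∈ s, ∀ j ∈ s, ¬ G.Adj i j) ⟨∅, by simp⟩ card
  exact ⟨S, (mem_filter.1 hS).2, hcard.symm⟩

lemma exists_adj_of_card_eq_indepNum {S : Finset V} (hS : ∀ i ∈ S, ∀ j ∈ S, ¬ G.Adj i j)
    (hcard : #S = indepNum G) {k : V} (hk : k ∉ S) : ∃ i ∈ S, G.Adj i k := by
  by_contra! hno
  have := card_le_indepNum (indep_insert hS hno)
  rw [card_insert_of_notMem hk] at this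
  omega

variable (G) in
lemma exists_indep_subset_dominating (T : Finset V) :
    ∃ I ⊆ T, (∀ i ∈ I, ∀ j ∈ I, ¬ G.Adj i j) ∧ ∀ k ∈ T, k ∈ I ∨ ∃ i ∈ I, G.Adj i k := by
  let indepSubsets := T.powerset.filter fun s => ∀ i ∈ s, ∀ j ∈ s, ¬ G.Adj i j
  obtain ⟨I, hI, hmax⟩ := exists_max_image indepSubsets card ⟨∅, by simp [indepSubsets]⟩
  obtain ⟨hIT, hIind⟩ := by simpa only [indepSubsets, mem_filter, mem_powerset] using hI
  refine ⟨I, hIT, hIind, fun k hkT => or_iff_not_imp_left.2 fun hkI => ?_⟩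
  by_contra! hno
  have := hmax (insert k I) (mem_filter.2
    ⟨mem_powerset.2 (insert_subset hkT hIT), indep_insert hIind hno⟩)
  rw [card_insert_of_notMem hkI] at this
  omega

end IndependentSets

section Equilibria

variable {V : Type*} [Fintype V] [DecidableEq V] {G : SimpleGraph V} [DecidableRel G.Adj]
  {estar : ℝ}

lemma isNE_indicator_of_maximal {S : Finset V} (he : 0 ≤ estar)
    (hS : ∀ i ∈ S, ∀ j ∈ S, ¬ G.Adj i j) (hdom : ∀ k ∉ S, ∃ i ∈ S, G.Adj i k) :
    isNE G estar (fun k => if k ∈ S then estar else 0) := by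
  have hnbr k : ∑ j ∈ G.neighborFinset k, (if j ∈ S then estar else 0)
      = #(G.neighborFinset k ∩ S) * estar := by
    rw [sum_ite_mem, sum_const, nsmul_eq_mul]
  have hnbr_mem {k} (hk : k ∈ S) : G.neighborFinset k ∩ S = ∅ :=
    eq_empty_of_forall_notMem fun j hj => by
      rw [mem_inter, SimpleGraph.mem_neighborFinset] at hj
      exact hS k hk j hj.2 hj.1
  refine ⟨fun k => by by_cases hk : k ∈ S <;> simp [hk, he], fun k => ?_, fun k hk => ?_⟩
  · by_cases hk : k ∈ S
    · simp [hk, hnbr, hnbr_mem hk]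
    · obtain ⟨i, hi, hadj⟩ := hdom k hk
      have : (1 : ℝ) ≤ #(G.neighborFinset k ∩ S) := by
        exact_mod_cast card_pos.2 ⟨i, mem_inter.2 ⟨(G.mem_neighborFinset k i).2 hadj.symm, hi⟩⟩
      simpa only [hk, if_false, hnbr, zero_add] using le_mul_of_one_le_left he this
  · have hkS : k ∈ S := by by_contra h; simp [h] at hk
    simp [hkS, hnbr, hnbr_mem hkS]

lemma isNE.sum_le_indepNum_mul {x : V → ℝ} (hx : isNE G estar x) (he : 0 ≤ estar) :
    ∑ k, x k ≤ indepNum G * estar := by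
  obtain ⟨hnn, -, hactive⟩ := hx
  let support := univ.filter (0 < x ·)
  obtain ⟨I, hIT, hI, hdom⟩ := exists_indep_subset_dominating G support
  have hcover : support ⊆ I.sup fun i => insert i (G.neighborFinset i) := fun k hk => by
    simp only [mem_sup, mem_insert, SimpleGraph.mem_neighborFinset]
    rcases hdom k hk with hkI | ⟨i, hi, hadj⟩
    exacts [⟨k, hkI, .inl rfl⟩, ⟨i, hi, .inr hadj⟩]
  have hclosed : ∀ i ∈ I, ∑ k ∈ insert i (G.neighborFinset i), x k = estar := fun i hi => by
    rw [sum_insert (G.notMem_neighborFinset_self i)]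
    exact hactive i (mem_filter.1 (hIT hi)).2
  calc ∑ k, x k = ∑ k ∈ support, x k :=
        (sum_filter_of_ne fun k _ hk => (hnn k).lt_of_ne' hk).symm
    _ ≤ ∑ k ∈ I.sup fun i => insert i (G.neighborFinset i), x k :=
        sum_le_sum_of_subset_of_nonneg hcover fun k _ _ => hnn k
    _ ≤ ∑ i ∈ I, ∑ k ∈ insert i (G.neighborFinset i), x k := sum_sup_le_sum_sum hnn _ _
    _ = #I * estar := by rw [sum_congr rfl hclosed, sum_const, nsmul_eq_mul]
    _ ≤ indepNum G * estar := by gcongr; exact card_le_indepNum hI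

end Equilibria

/-- The maximum aggregate effort over Nash equilibria equals `α(G)·e*`,
attained by the specialized equilibrium supported on a maximum independent set. -/
theorem stmt2 {V : Type*} [Fintype V] [DecidableEq V]
    (G : SimpleGraph V) [DecidableRel G.Adj]
    (estar : ℝ) (he : 0 < estar) :
    IsGreatest {s : ℝ | ∃ x : V → ℝ, isNE G estar x ∧ s = ∑ k, x k}
      ((indepNum G : ℝ) * estar) ∧
    ∃ S : Finset V, (∀ i ∈ S, ∀ j ∈ S, ¬ G.Adj i j) ∧ S.card = indepNum G ∧
      isNE G estar (fun k => if k ∈ S then estar else 0) ∧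
      (∑ k, (if k ∈ S then estar else 0)) = (indepNum G : ℝ) * estar := by
  obtain ⟨S, hS, hcard⟩ := exists_card_eq_indepNum G
  have hNE := isNE_indicator_of_maximal he.le hS fun k => exists_adj_of_card_eq_indepNum hS hcard
  have hsum : (∑ k, (if k ∈ S then estar else 0)) = (indepNum G : ℝ) * estar := by
    rw [sum_ite_mem, univ_inter, sum_const, nsmul_eq_mul, hcard]
  refine ⟨⟨⟨_, hNE, hsum.symm⟩, ?_⟩, S, hS, hcard, hNE, hsum⟩
  rintro s ⟨x, hx, rfl⟩
  exact hx.sum_le_indepNum_mul he.le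
end

section
/- Let b be increasing and concave with b'(e*) = c and e* > 0, and let n ≥ 2. For any Nash equilibrium x of the public goods game, summing over vertices yields: n·b(e*) + (α_w − n)·σ_b·c·e* ≤ max over Nash equilibria of Σ_k b(E_k(x)) ≤ n·b(e*) + (α_w − n)·c·e*, where α_w·e* is the maximum over Nash equilibria of Σ_k E_k(x) (the (A+I)𝟙-weighted aggregate effort) and σ_b = (b(n·e*) − b(e*))/(c·e*·(n−1)). -/
/-!
By concavity, `b` lies below its tangent at `e*`, of slope `c`, and above its chord on
`[e*, n e*]`, of slope `σ_b c`. At a Nash equilibrium every local effort `E_k` lies in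
`[e*, n e*]`, so summing over the vertices bounds `Σ_k b(E_k)` by `n b(e*)` plus the slope times
`Σ_k E_k - n e*`. Since `Σ_k E_k ≤ α_w e*` at every equilibrium, with equality at a maximizing
one, the tangent gives the upper bound and the chord, evaluated at the maximizer, the lower one.
-/

open Finset

/-- Total local effort `E_k(x) = x_k + Σ_{j∈N_k} x_j`. -/
def localEffort {V : Type*} [Fintype V] (G : SimpleGraph V) [DecidableRel G.Adj]
    (x : V → ℝ) (k : V) : ℝ := x k + ∑ j ∈ G.neighborFinset k, x j

lemma ConcaveOn.le_add_deriv_mul_sub {S : Set ℝ} {f : ℝ → ℝ} {x y : ℝ}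
    (hf : ConcaveOn ℝ S f) (hx : x ∈ S) (hy : y ∈ S) (hd : DifferentiableAt ℝ f x) :
    f y ≤ f x + deriv f x * (y - x) := by
  rcases lt_trichotomy y x with hyx | rfl | hxy
  · have hslope := hf.deriv_le_slope hy hx hyx hd
    have hchord : (x - y) * slope f y x = f x - f y := sub_smul_slope f y x
    nlinarith
  · simp
  · have hslope := hf.slope_le_deriv hx hy hxy hd
    have hchord : (y - x) * slope f x y = f y - f x := sub_smul_slope f x y
    nlinarith

lemma ConcaveOn.add_slope_mul_sub_le {𝕜 : Type*} [Field 𝕜] [LinearOrder 𝕜]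
    [IsStrictOrderedRing 𝕜] {s : Set 𝕜} {f : 𝕜 → 𝕜} {a c y : 𝕜}
    (hf : ConcaveOn 𝕜 s f) (ha : a ∈ s) (hc : c ∈ s)
    (hay : a ≤ y) (hyc : y ≤ c) :
    f a + slope f a c * (y - a) ≤ f y := by
  rcases hay.eq_or_lt with rfl | hay
  · simp
  have hy : y ∈ s := hf.1.ordConnected.out ha hc ⟨hay.le, hyc⟩
  have hslope : slope f a c ≤ slope f a y :=
    hf.slope_anti ha ⟨hy, hay.ne'⟩ ⟨hc, (hay.trans_le hyc).ne'⟩ hyc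
  have hchord : (y - a) * slope f a y = f y - f a := sub_smul_slope f a y
  nlinarith

lemma Finset.sum_add_mul_sub {ι R : Type*} [Fintype ι] [Ring R] (u : ι → R) (p m q : R) :
    ∑ k, (p + m * (u k - q)) =
      Fintype.card ι * p + m * (∑ k, u k - Fintype.card ι * q) := by
  simp only [sum_add_distrib, ← mul_sum, sum_sub_distrib, sum_const, card_univ, nsmul_eq_mul]

namespace isNE

variable {V : Type*} [Fintype V] {G : SimpleGraph V} [DecidableRel G.Adj] {estar : ℝ}
  {x : V → ℝ}

lemma le_estar (hx : isNE G estar x) (he : 0 ≤ estar) (k : V) : x k ≤ estar := by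
  rcases (hx.1 k).eq_or_lt with hk | hk
  · rw [← hk]; exact he
  · rw [← hx.2.2 k hk]
    exact le_add_of_nonneg_right (sum_nonneg fun j _ => hx.1 j)

lemma le_localEffort (hx : isNE G estar x) (k : V) : estar ≤ localEffort G x k := hx.2.1 k

lemma localEffort_le (hx : isNE G estar x) (he : 0 ≤ estar) (k : V) :
    localEffort G x k ≤ Fintype.card V * estar := by
  classical
  calc localEffort G x k = ∑ j ∈ insert k (G.neighborFinset k), x j := by
        rw [sum_insert (G.notMem_neighborFinset_self k)]; rfl
    _ ≤ ∑ j, x j := sum_le_sum_of_subset_of_nonneg (subset_univ _) fun j _ _ => hx.1 j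
    _ ≤ ∑ _j : V, estar := sum_le_sum fun j _ => hx.le_estar he j
    _ = Fintype.card V * estar := by simp

variable {b : ℝ → ℝ}

lemma sum_comp_localEffort_le (hx : isNE G estar x) (hb : ConcaveOn ℝ (Set.Ici 0) b)
    (he : 0 ≤ estar) (hd : DifferentiableAt ℝ b estar) :
    ∑ k, b (localEffort G x k) ≤ Fintype.card V * b estar +
      deriv b estar * (∑ k, localEffort G x k - Fintype.card V * estar) := by
  rw [← sum_add_mul_sub]
  exact sum_le_sum fun k _ => hb.le_add_deriv_mul_sub he (he.trans (hx.le_localEffort k)) hd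

lemma le_sum_comp_localEffort (hx : isNE G estar x) (hb : ConcaveOn ℝ (Set.Ici 0) b)
    (he : 0 ≤ estar) :
    Fintype.card V * b estar + slope b estar (Fintype.card V * estar) *
      (∑ k, localEffort G x k - Fintype.card V * estar) ≤ ∑ k, b (localEffort G x k) := by
  rw [← sum_add_mul_sub]
  refine sum_le_sum fun k _ => hb.add_slope_mul_sub_le he ?_ (hx.le_localEffort k)
    (hx.localEffort_le he k)
  exact he.trans ((hx.le_localEffort k).trans (hx.localEffort_le he k))

end isNE

theorem stmt6_general {V : Type*} [Fintype V] (G : SimpleGraph V) [DecidableRel G.Adj]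
    (b : ℝ → ℝ) (c estar : ℝ)
    (hb_concave : ConcaveOn ℝ (Set.Ici (0:ℝ)) b)
    (hb_diff : ∀ y ∈ Set.Ici (0:ℝ), DifferentiableAt ℝ b y)
    (hc : 0 < c) (he : 0 < estar) (hfoc : deriv b estar = c)
    (n : ℕ) (hn : n = Fintype.card V) (hn2 : 2 ≤ n)
    (σb : ℝ) (hσ : σb = (b ((n : ℝ) * estar) - b estar) / (c * estar * ((n : ℝ) - 1)))
    (αw : ℝ)
    -- `α_w·e*` is the maximum over Nash equilibria of `Σ_k E_k(x)`
    (hαw : IsGreatest {s : ℝ | ∃ x : V → ℝ, isNE G estar x ∧ s = ∑ k, localEffort G x k}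
      (αw * estar)) :
    (n : ℝ) * b estar + (αw - n) * σb * c * estar ≤
      sSup {s : ℝ | ∃ x : V → ℝ, isNE G estar x ∧ s = ∑ k, b (localEffort G x k)} ∧
    sSup {s : ℝ | ∃ x : V → ℝ, isNE G estar x ∧ s = ∑ k, b (localEffort G x k)} ≤
      (n : ℝ) * b estar + (αw - n) * c * estar := by
  subst hn
  set T := {s : ℝ | ∃ x : V → ℝ, isNE G estar x ∧ s = ∑ k, b (localEffort G x k)}
  have hub : ∀ s ∈ T, s ≤ Fintype.card V * b estar + (αw - Fintype.card V) * c * estar := by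
    rintro _ ⟨x, hx, rfl⟩
    have hsum : ∑ k, localEffort G x k ≤ αw * estar := hαw.2 ⟨x, hx, rfl⟩
    have htangent := hx.sum_comp_localEffort_le hb_concave he.le (hb_diff estar he.le)
    rw [hfoc] at htangent
    nlinarith
  obtain ⟨x₀, hx₀, hsum₀⟩ := hαw.1
  have hmem : ∑ k, b (localEffort G x₀ k) ∈ T := ⟨x₀, hx₀, rfl⟩
  refine ⟨le_csSup_of_le ⟨_, hub⟩ hmem ?_, csSup_le ⟨_, hmem⟩ hub⟩
  have hn1 : (1 : ℝ) < Fintype.card V := by exact_mod_cast hn2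
  have hslope : slope b estar (Fintype.card V * estar) = σb * c := by
    rw [hσ, slope_def_field]
    field_simp
  have hchord := hx₀.le_sum_comp_localEffort hb_concave he.le
  rw [hslope, ← hsum₀] at hchord
  linarith

/-- bounds on the maximum aggregate benefit over Nash equilibria in terms of
the `(A+I)𝟙`-weighted independence number `α_w` and the curvature parameter `σ_b`. -/
theorem stmt6 {V : Type*} [Fintype V] (G : SimpleGraph V) [DecidableRel G.Adj]
    (b : ℝ → ℝ) (c estar : ℝ)
    (hb_mono : MonotoneOn b (Set.Ici (0:ℝ)))
    (hb_concave : ConcaveOn ℝ (Set.Ici (0:ℝ)) b)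
    (hb_diff : ∀ y ∈ Set.Ici (0:ℝ), DifferentiableAt ℝ b y)
    (hc : 0 < c) (he : 0 < estar) (hfoc : deriv b estar = c)
    (n : ℕ) (hn : n = Fintype.card V) (hn2 : 2 ≤ n)
    (σb : ℝ) (hσ : σb = (b ((n : ℝ) * estar) - b estar) / (c * estar * ((n : ℝ) - 1)))
    (αw : ℝ)
    -- `α_w·e*` is the maximum over Nash equilibria of `Σ_k E_k(x)`
    (hαw : IsGreatest {s : ℝ | ∃ x : V → ℝ, isNE G estar x ∧ s = ∑ k, localEffort G x k}
      (αw * estar)) :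
    (n : ℝ) * b estar + (αw - n) * σb * c * estar ≤
      sSup {s : ℝ | ∃ x : V → ℝ, isNE G estar x ∧ s = ∑ k, b (localEffort G x k)} ∧
    sSup {s : ℝ | ∃ x : V → ℝ, isNE G estar x ∧ s = ∑ k, b (localEffort G x k)} ≤
      (n : ℝ) * b estar + (αw - n) * c * estar :=
  stmt6_general G b c estar hb_concave hb_diff hc he hfoc n hn hn2 σb hσ αw hαw
end

section
/- Let f : [0,1] → ℝ be a function that is continuous, strictly convex on [0, μ_d] and strictly concave on [μ_d, 1] for some μ_d ∈ (0,1). Then the concave closure C_f of f (the pointwise infimum of concave functions dominating f on [0,1]) satisfies C_f(0) = f(0), and there exists μ₁ ∈ (0,1] such that C_f equals the chord from (0, f(0)) to (μ₁, f(μ₁)) on [0, μ₁] and equals f on [μ₁, 1]. -/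
/-!
Let `μ₁` maximise the slope `(f μ - f 0) / μ` of the chord from `(0, f 0)` over `μ ∈ [μ_d, 1]`.
That chord dominates `f` on `[μ_d, 1]` by the choice of `μ₁`, and on `[0, μ_d]` by convexity,
since it dominates `f` at both ends. Gluing the chord on `[0, μ₁]` to `f` on `[μ₁, 1]` therefore
gives a concave majorant of `f`, and it is the least one: any concave majorant lies above `f` on
`[μ₁, 1]` and, by concavity, above the chord through its own values at `0` and `μ₁`.
-/

/-- Concave closure of `f` on `[0,1]`: pointwise infimum of concave functions dominating `f`. -/
noncomputable def concaveClosure (f : ℝ → ℝ) (x : ℝ) : ℝ :=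
  sInf {y : ℝ | ∃ ℓ : ℝ → ℝ, ConcaveOn ℝ (Set.Icc (0:ℝ) 1) ℓ ∧
    (∀ t ∈ Set.Icc (0:ℝ) 1, f t ≤ ℓ t) ∧ y = ℓ x}

open Set

section AffineComparison

variable {f : ℝ → ℝ} {a b p q x : ℝ}

theorem ConvexOn.le_affine_of_le_of_le (hf : ConvexOn ℝ (Icc a b) f) (ha : f a ≤ p + q * a)
    (hb : f b ≤ p + q * b) (hx : x ∈ Icc a b) : f x ≤ p + q * x := by
  have hab : a ≤ b := hx.1.trans hx.2
  have hg : ConvexOn ℝ (Icc a b) (fun y => f y - q * y) :=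
    hf.sub ((LinearMap.mul ℝ ℝ q).concaveOn (convex_Icc a b))
  have hseg := hg.le_on_segment (left_mem_Icc.2 hab) (right_mem_Icc.2 hab)
    (by rwa [segment_eq_Icc hab])
  have hmax : max (f a - q * a) (f b - q * b) ≤ p := max_le (by linarith) (by linarith)
  linarith

theorem ConcaveOn.affine_le_of_le_of_le (hf : ConcaveOn ℝ (Icc a b) f) (ha : p + q * a ≤ f a)
    (hb : p + q * b ≤ f b) (hx : x ∈ Icc a b) : p + q * x ≤ f x := by
  have := hf.neg.le_affine_of_le_of_le (p := -p) (q := -q) (by simp only [Pi.neg_apply]; linarith)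
    (by simp only [Pi.neg_apply]; linarith) hx
  simp only [Pi.neg_apply] at this
  linarith

end AffineComparison

theorem ConcaveOn.piecewise_affine_Icc {g : ℝ → ℝ} {a b c p q : ℝ}
    (hg : ConcaveOn ℝ (Icc b c) g) (hgb : g b = p + q * b)
    (hle : ∀ x ∈ Icc b c, g x ≤ p + q * x) :
    ConcaveOn ℝ (Icc a c) (fun x => if x ≤ b then p + q * x else g x) := by
  set h : ℝ → ℝ := fun x => if x ≤ b then p + q * x else g x
  have h_le : ∀ x ∈ Icc a c, h x ≤ p + q * x := fun x hx => by
    by_cases hxb : x ≤ b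
    · simp only [h, if_pos hxb, le_refl]
    · simp only [h, if_neg hxb]; exact hle x ⟨(not_le.1 hxb).le, hx.2⟩
  refine LinearOrder.concaveOn_of_lt (convex_Icc a c) fun x hx y hy hxy α β hα hβ hαβ => ?_
  obtain rfl : β = 1 - α := by linarith
  simp only [smul_eq_mul]
  set z := α * x + (1 - α) * y
  have hzy : z < y := by nlinarith
  by_cases hzb : z ≤ b
  · -- left of `b` the function is the affine one, which dominates it everywhere
    rw [show h z = p + q * z from if_pos hzb]
    nlinarith [h_le x hx, h_le y hy]
  have hby : b < y := (not_le.1 hzb).trans hzy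
  have hy_mem : y ∈ Icc b c := ⟨hby.le, hy.2⟩
  rw [show h z = g z from if_neg hzb, show h y = g y from if_neg (not_le.2 hby)]
  by_cases hxb : x ≤ b
  · rw [show h x = p + q * x from if_pos hxb]
    -- `z` is a combination of `b` and `y` giving `b` at least the weight `α` that `x` had
    set u := (y - z) / (y - b)
    have hyb_pos : 0 < y - b := sub_pos.2 hby
    have hu : u * b + (1 - u) * y = z := by
      simp only [u]; field_simp; ring
    have hαu : α ≤ u := by
      simp only [u]; rw [le_div_iff₀ hyb_pos]; nlinarith
    have hu1 : u ≤ 1 := by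
      simp only [u]; rw [div_le_one hyb_pos]; linarith
    have hgz := hg.2 (left_mem_Icc.2 (hby.le.trans hy.2)) hy_mem
      (by linarith : 0 ≤ u) (by linarith : 0 ≤ 1 - u) (by ring)
    simp only [smul_eq_mul, hu, hgb] at hgz
    linear_combination hgz + mul_nonneg (sub_nonneg.2 hαu) (sub_nonneg.2 (hle y hy_mem)) - q * hu
  · rw [show h x = g x from if_neg hxb]
    simpa only [smul_eq_mul] using
      hg.2 ⟨(not_le.1 hxb).le, hx.2⟩ hy_mem hα.le hβ.le hαβ

theorem concaveClosure_eq_of_forall_le {f g : ℝ → ℝ} {x : ℝ} (hg : ConcaveOn ℝ (Icc 0 1) g)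
    (hfg : ∀ t ∈ Icc (0 : ℝ) 1, f t ≤ g t)
    (hmin : ∀ ℓ : ℝ → ℝ, ConcaveOn ℝ (Icc 0 1) ℓ → (∀ t ∈ Icc (0 : ℝ) 1, f t ≤ ℓ t) → g x ≤ ℓ x) :
    concaveClosure f x = g x :=
  IsLeast.csInf_eq ⟨⟨g, hg, hfg, rfl⟩, by rintro _ ⟨ℓ, hℓ, hfℓ, rfl⟩; exact hmin ℓ hℓ hfℓ⟩

theorem concaveClosure_eq_chord_and_eq_self {f : ℝ → ℝ} {μ : ℝ} (hμ : μ ∈ Ioc (0 : ℝ) 1)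
    (hconc : ConcaveOn ℝ (Icc μ 1) f)
    (hle : ∀ x ∈ Icc (0 : ℝ) 1, f x ≤ f 0 + (f μ - f 0) / μ * x) :
    (∀ x ∈ Icc 0 μ, concaveClosure f x = f 0 + (f μ - f 0) / μ * x) ∧
      ∀ x ∈ Icc μ 1, concaveClosure f x = f x := by
  obtain ⟨hμ0, hμ1⟩ := hμ
  set L : ℝ → ℝ := fun x => f 0 + (f μ - f 0) / μ * x
  have hLμ : f μ = L μ := by simp only [L]; field_simp; ring
  have key : ∀ x ∈ Icc (0 : ℝ) 1, concaveClosure f x = if x ≤ μ then L x else f x := by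
    intro x hx
    refine concaveClosure_eq_of_forall_le
      (hconc.piecewise_affine_Icc hLμ fun t ht => hle t ⟨hμ0.le.trans ht.1, ht.2⟩)
      (fun t ht => ?_) fun ℓ hℓ hfℓ => ?_
    · split_ifs
      exacts [hle t ht, le_rfl]
    · split_ifs with hxμ
      · exact (hℓ.subset (Icc_subset_Icc_right hμ1) (convex_Icc 0 μ)).affine_le_of_le_of_le
          (by simpa using hfℓ 0 ⟨le_rfl, zero_le_one⟩)
          (hLμ.symm.trans_le (hfℓ μ ⟨hμ0.le, hμ1⟩)) ⟨hx.1, hxμ⟩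
      · exact hfℓ x hx
  refine ⟨fun x hx => ?_, fun x hx => ?_⟩
  · rw [key x ⟨hx.1, hx.2.trans hμ1⟩, if_pos hx.2]
  · rw [key x ⟨hμ0.le.trans hx.1, hx.2⟩]
    split_ifs with hxμ
    · rw [le_antisymm hxμ hx.1, ← hLμ]
    · rfl

theorem exists_forall_le_chord_from_zero {f : ℝ → ℝ} {a b : ℝ} (ha : 0 < a) (hab : a ≤ b)
    (hf : ContinuousOn f (Icc a b)) :
    ∃ μ ∈ Icc a b, ∀ x ∈ Icc a b, f x ≤ f 0 + (f μ - f 0) / μ * x := by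
  have hslope : ContinuousOn (fun x => (f x - f 0) / x) (Icc a b) :=
    (hf.sub continuousOn_const).div continuousOn_id fun x hx => (ha.trans_le hx.1).ne'
  obtain ⟨μ, hμ, hmax⟩ := isCompact_Icc.exists_isMaxOn (nonempty_Icc.2 hab) hslope
  refine ⟨μ, hμ, fun x hx => ?_⟩
  have hx0 : 0 < x := ha.trans_le hx.1
  have : (f x - f 0) / x ≤ (f μ - f 0) / μ := hmax hx
  rw [div_le_iff₀ hx0] at this
  linarith

/-- for `f` continuous on `[0,1]`, strictly convex on `[0,μ_d]` and strictly
concave on `[μ_d,1]`, the concave closure agrees with `f` at `0`, is a chord from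
`(0,f 0)` to `(μ₁, f μ₁)` on `[0,μ₁]` for some `μ₁ ∈ (0,1]`, and equals `f` on `[μ₁,1]`. -/
theorem stmt13 (f : ℝ → ℝ) (μd : ℝ) (hμd : μd ∈ Set.Ioo (0:ℝ) 1)
    (hcont : ContinuousOn f (Set.Icc (0:ℝ) 1))
    (hconv : StrictConvexOn ℝ (Set.Icc (0:ℝ) μd) f)
    (hconc : StrictConcaveOn ℝ (Set.Icc μd 1) f) :
    concaveClosure f 0 = f 0 ∧
    ∃ μ1 ∈ Set.Ioc (0:ℝ) 1,
      (∀ x ∈ Set.Icc (0:ℝ) μ1,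
        concaveClosure f x = f 0 + (f μ1 - f 0) / μ1 * x) ∧
      (∀ x ∈ Set.Icc μ1 1, concaveClosure f x = f x) := by
  obtain ⟨hμd0, hμd1⟩ := hμd
  obtain ⟨μ1, ⟨hμdμ1, hμ11⟩, hchord⟩ :=
    exists_forall_le_chord_from_zero hμd0 hμd1.le (hcont.mono (Icc_subset_Icc_left hμd0.le))
  have hμ10 : 0 < μ1 := hμd0.trans_le hμdμ1
  have hle : ∀ x ∈ Icc (0 : ℝ) 1, f x ≤ f 0 + (f μ1 - f 0) / μ1 * x := by
    intro x hx
    rcases le_total μd x with hμdx | hxμd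
    · exact hchord x ⟨hμdx, hx.2⟩
    · exact hconv.convexOn.le_affine_of_le_of_le (by simp) (hchord μd ⟨le_rfl, hμd1.le⟩)
        ⟨hx.1, hxμd⟩
  obtain ⟨hC_chord, hC_self⟩ := concaveClosure_eq_chord_and_eq_self ⟨hμ10, hμ11⟩
    (hconc.concaveOn.subset (Icc_subset_Icc_left hμdμ1) (convex_Icc μ1 1)) hle
  refine ⟨?_, μ1, ⟨hμ10, hμ11⟩, hC_chord, hC_self⟩
  simpa using hC_chord 0 ⟨le_rfl, hμ10.le⟩
end

section
/- Let G = (V,E) be a finite simple graph, e* > 0, and w : V → ℝ_{>0} a positive weight function. For any Nash equilibrium x of the public goods game (x ≥ 0, E_k(x) ≥ e* for all k, E_k(x) = e* when x_k > 0), the w-weighted aggregate effort satisfies Σ_k w_k·x_k ≤ α_w(G)·e*, where α_w(G) is the maximum of Σ_{k∈S} w_k over independent sets S of G; moreover equality holds for the specialized equilibrium supported on a w-weighted maximum independent set (when that set is maximal). -/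
/-! Greedy domination: repeatedly pick a vertex `a` of maximal weight in the support of `x`,
put it into `S`, and discard its closed neighbourhood. The equilibrium condition at `a` says
that the closed neighbourhood carries effort exactly `e*`, so the discarded part contributes
at most `w a * e*` to `∑ w k * x k`. The vertices picked form an independent set, whose weight
is at most `α_w(G)`. -/

open Finset

section Greedy

variable {V : Type*} [Fintype V] [DecidableEq V] (G : SimpleGraph V) [DecidableRel G.Adj]

abbrev closedNeighborFinset (a : V) : Finset V := insert a (G.neighborFinset a)

lemma sum_inter_closedNeighborFinset_le {x w : V → ℝ} (hx : ∀ k, 0 ≤ x k) (T : Finset V)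
    {a : V} (hwa : 0 ≤ w a) (hmax : ∀ k ∈ T, w k ≤ w a) :
    ∑ k ∈ T ∩ closedNeighborFinset G a, w k * x k
      ≤ w a * ∑ k ∈ closedNeighborFinset G a, x k :=
  calc ∑ k ∈ T ∩ closedNeighborFinset G a, w k * x k
      ≤ ∑ k ∈ T ∩ closedNeighborFinset G a, w a * x k :=
        sum_le_sum fun k hk => mul_le_mul_of_nonneg_right (hmax k (mem_inter.mp hk).1) (hx k)
    _ ≤ ∑ k ∈ closedNeighborFinset G a, w a * x k :=
        sum_le_sum_of_subset_of_nonneg inter_subset_right fun k _ _ => mul_nonneg hwa (hx k)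
    _ = w a * ∑ k ∈ closedNeighborFinset G a, x k := (mul_sum ..).symm

lemma independent_insert_of_forall_notMem_closedNeighborFinset {S : Finset V} {a : V}
    (hS : ∀ i ∈ S, ∀ j ∈ S, ¬ G.Adj i j) (haS : ∀ j ∈ S, j ∉ closedNeighborFinset G a) :
    ∀ i ∈ insert a S, ∀ j ∈ insert a S, ¬ G.Adj i j := by
  have hnadj : ∀ j ∈ S, ¬ G.Adj a j := fun j hj hadj =>
    haS j hj (mem_insert_of_mem ((G.mem_neighborFinset a j).mpr hadj))
  intro i hi j hj
  rcases mem_insert.mp hi with rfl | hiS <;> rcases mem_insert.mp hj with rfl | hjS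
  · exact G.irrefl
  · exact hnadj j hjS
  · exact fun hadj => hnadj i hiS hadj.symm
  · exact hS i hiS j hjS

theorem exists_independent_subset_sum_mul_le {x w : V → ℝ} (hx : ∀ k, 0 ≤ x k)
    (hw : ∀ k, 0 ≤ w k) {c : ℝ} (T : Finset V)
    (hT : ∀ a ∈ T, ∑ k ∈ closedNeighborFinset G a, x k ≤ c) :
    ∃ S ⊆ T, (∀ i ∈ S, ∀ j ∈ S, ¬ G.Adj i j) ∧
      ∑ k ∈ T, w k * x k ≤ (∑ k ∈ S, w k) * c := by
  induction T using Finset.strongInduction with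
  | _ T ih =>
    rcases T.eq_empty_or_nonempty with rfl | hTne
    · exact ⟨∅, empty_subset _, by simp, by simp⟩
    obtain ⟨a, haT, hmax⟩ := T.exists_max_image w hTne
    set C := closedNeighborFinset G a
    have hrest : T \ C ⊂ T :=
      (ssubset_iff_of_subset sdiff_subset).mpr ⟨a, haT, by simp [C]⟩
    obtain ⟨S, hST, hS, hsum⟩ :=
      ih _ hrest fun k hk => hT k (sdiff_subset hk)
    have hSC : ∀ j ∈ S, j ∉ C := fun j hj => (mem_sdiff.mp (hST hj)).2
    have haS : a ∉ S := fun h => hSC a h (mem_insert_self a _)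
    refine ⟨insert a S, insert_subset haT (hST.trans sdiff_subset),
      independent_insert_of_forall_notMem_closedNeighborFinset G hS hSC, ?_⟩
    have hlocal : ∑ k ∈ T ∩ C, w k * x k ≤ w a * c :=
      (sum_inter_closedNeighborFinset_le G hx T (hw a) hmax).trans
        (mul_le_mul_of_nonneg_left (hT a haT) (hw a))
    calc ∑ k ∈ T, w k * x k = ∑ k ∈ T ∩ C, w k * x k + ∑ k ∈ T \ C, w k * x k :=
          (sum_inter_add_sum_sdiff T C _).symm
      _ ≤ w a * c + (∑ k ∈ S, w k) * c := add_le_add hlocal hsum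
      _ = (∑ k ∈ insert a S, w k) * c := by rw [sum_insert haS, add_mul]

end Greedy

/-- for positive weights `w`, every Nash equilibrium has `w`-weighted aggregate
effort at most `α_w(G)·e*` (with `α_w(G)` the `w`-weighted independence number), and the
specialized equilibrium on a `w`-weighted maximum independent set (when maximal) attains it. -/
theorem stmt17 {V : Type*} [Fintype V] [DecidableEq V]
    (G : SimpleGraph V) [DecidableRel G.Adj]
    (estar : ℝ) (he : 0 < estar)
    (w : V → ℝ) (hw : ∀ k, 0 < w k)
    (αw : ℝ)
    (hαw : IsGreatest {s : ℝ | ∃ S : Finset V,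
      (∀ i ∈ S, ∀ j ∈ S, ¬ G.Adj i j) ∧ s = ∑ k ∈ S, w k} αw) :
    (∀ x : V → ℝ, isNE G estar x → ∑ k, w k * x k ≤ αw * estar) ∧
    (∀ S : Finset V, (∀ i ∈ S, ∀ j ∈ S, ¬ G.Adj i j) → (∑ k ∈ S, w k) = αw →
      -- S maximal
      (∀ k : V, k ∉ S → ∃ j ∈ S, G.Adj k j) →
      ∑ k, w k * (if k ∈ S then estar else 0) = αw * estar) := by
  refine ⟨fun x ⟨hx, _, hbind⟩ => ?_, fun S _ hSw _ => ?_⟩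
  · have hsupp : ∀ a ∈ univ.filter (0 < x ·), ∑ k ∈ closedNeighborFinset G a, x k ≤ estar :=
      fun a ha => by
        rw [sum_insert (G.notMem_neighborFinset_self a), hbind a (mem_filter.mp ha).2]
    obtain ⟨S, -, hS, hsum⟩ := exists_independent_subset_sum_mul_le G hx
      (fun k => (hw k).le) _ hsupp
    calc ∑ k, w k * x k = ∑ k ∈ univ.filter (0 < x ·), w k * x k :=
          (sum_filter_of_ne fun k _ hk => lt_of_le_of_ne (hx k)
            fun h => hk (by rw [← h, mul_zero])).symm
      _ ≤ (∑ k ∈ S, w k) * estar := hsum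
      _ ≤ αw * estar := mul_le_mul_of_nonneg_right (hαw.2 ⟨S, hS, rfl⟩) he.le
  · simp only [mul_ite, mul_zero, sum_ite_mem, univ_inter, ← sum_mul, hSw]
end
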